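/- Let K, L be convex bodies in ℝ³ containing the origin in their interiors, with relative quermassintegrals W₀, W₁, W₂, W₃ of K with respect to L, and assume W₂ > 0. Let μ be the surface area measure of K. If K is in the class ℜ₁ with respect to L, then ∫_{S²} h_K(u)²/h_L(u) dμ(u) ≤ 3 V(K) W₁ / W₂. -/

import Mathlib

/-!
For every unit vector `u` the ratio `r = h_K(u) / h_L(u)` lies in `[r_o(K,L), R_o(K,L)]`, so the
Bonnesen function `B₀(r)` is nonnegative there; multiplied by `h_L(u) > 0` this is the pointwise
bound `W₂ h_K² / h_L ≤ 2 W₁ h_K - W₀ h_L`. Integrating against `S_K` and using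
`∫ h_K dS_K = 3 V(K)`, `∫ h_L dS_K = 3 W₁` (the linear coefficients of `V(K + tK) = (1 + t)³ V(K)`
and of `V(K + tL)`) and `W₀ = V(K)` gives `W₂ ∫ h_K² / h_L dS_K ≤ 6 V(K) W₁ - 3 W₀ W₁ = 3 V(K) W₁`.
-/

open scoped Pointwise RealInnerProductSpace
open MeasureTheory Metric

noncomputable section

/-- The support function `h_K(u) = sup_{x ∈ K} ⟨x, u⟩` of a set `K ⊆ ℝ³`. -/
def supp (K : Set (EuclideanSpace ℝ (Fin 3))) (u : EuclideanSpace ℝ (Fin 3)) : ℝ :=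
  sSup ((fun x => ⟪x, u⟫) '' K)

/-- `r_o(K,L) = min_{u ∈ S²} h_K(u)/h_L(u)`. -/
def rIn (K L : Set (EuclideanSpace ℝ (Fin 3))) : ℝ :=
  sInf ((fun u => supp K u / supp L u) '' sphere (0 : EuclideanSpace ℝ (Fin 3)) 1)

/-- `R_o(K,L) = max_{u ∈ S²} h_K(u)/h_L(u)`. -/
def rOut (K L : Set (EuclideanSpace ℝ (Fin 3))) : ℝ :=
  sSup ((fun u => supp K u / supp L u) '' sphere (0 : EuclideanSpace ℝ (Fin 3)) 1)

local notation "E³" => EuclideanSpace ℝ (Fin 3)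

section SupportFunction

variable {K : Set E³}

lemma bddAbove_inner_image (hK : Bornology.IsBounded K) (u : E³) :
    BddAbove ((fun x => ⟪x, u⟫) '' K) := by
  obtain ⟨C, hC⟩ := hK.exists_norm_le
  refine ⟨C * ‖u‖, ?_⟩
  rintro _ ⟨x, hx, rfl⟩
  exact (real_inner_le_norm x u).trans (by gcongr; exact hC x hx)

lemma inner_le_supp (hK : Bornology.IsBounded K) {x : E³} (hx : x ∈ K) (u : E³) :
    ⟪x, u⟫ ≤ supp K u :=
  le_csSup (bddAbove_inner_image hK u) ⟨x, hx, rfl⟩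

lemma supp_le (hK : K.Nonempty) {u : E³} {c : ℝ} (h : ∀ x ∈ K, ⟪x, u⟫ ≤ c) :
    supp K u ≤ c :=
  csSup_le (hK.image _) (by rintro _ ⟨x, hx, rfl⟩; exact h x hx)

lemma supp_pos (hK : Bornology.IsBounded K) (h0 : (0 : E³) ∈ interior K) {u : E³}
    (hu : u ≠ 0) : 0 < supp K u := by
  obtain ⟨ε, hε, hball⟩ := Metric.mem_nhds_iff.mp (mem_interior_iff_mem_nhds.mp h0)
  have hu' : 0 < ‖u‖ := norm_pos_iff.mpr hu
  have hmem : (ε / 2 / ‖u‖) • u ∈ K := hball <| by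
    rw [mem_ball_zero_iff, norm_smul, Real.norm_of_nonneg (by positivity),
      div_mul_cancel₀ _ hu'.ne']
    linarith
  calc 0 < ε / 2 * ‖u‖ := by positivity
    _ = ⟪(ε / 2 / ‖u‖) • u, u⟫ := by
      rw [real_inner_smul_left, real_inner_self_eq_norm_sq]; field_simp
    _ ≤ supp K u := inner_le_supp hK hmem u

lemma continuous_supp (hK : Bornology.IsBounded K) (hne : K.Nonempty) : Continuous (supp K) := by
  obtain ⟨C, hC⟩ := hK.exists_norm_le
  refine (LipschitzWith.of_le_add_mul' C fun u v => supp_le hne fun x hx => ?_).continuous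
  calc ⟪x, u⟫ = ⟪x, v⟫ + ⟪x, u - v⟫ := by rw [← inner_add_right, add_sub_cancel]
    _ ≤ supp K v + C * dist u v := by
      gcongr
      · exact inner_le_supp hK hx v
      · rw [dist_eq_norm]
        exact (real_inner_le_norm x _).trans (by gcongr; exact hC x hx)

lemma supp_div_supp_mem_Icc {L : Set E³} (hKc : IsCompact K) (hK : K.Nonempty)
    (hLc : IsCompact L) (hL0 : (0 : E³) ∈ interior L) {u : E³} (hu : u ∈ sphere (0 : E³) 1) :
    supp K u / supp L u ∈ Set.Icc (rIn K L) (rOut K L) := by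
  have hcont : ContinuousOn (fun u => supp K u / supp L u) (sphere (0 : E³) 1) :=
    (continuous_supp hKc.isBounded hK).continuousOn.div
      (continuous_supp hLc.isBounded ⟨0, interior_subset hL0⟩).continuousOn
      fun v hv => (supp_pos hLc.isBounded hL0 (ne_zero_of_mem_unit_sphere ⟨v, hv⟩)).ne'
  have himage := (isCompact_sphere (0 : E³) 1).image_of_continuousOn hcont
  exact ⟨csInf_le himage.bddBelow ⟨u, hu, rfl⟩, le_csSup himage.bddAbove ⟨u, hu, rfl⟩⟩

end SupportFunction

open Filter Topology in
lemma eq_of_tendsto_slope_of_eq_cubic {f : ℝ → ℝ} {a b c d I : ℝ}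
    (hf : ∀ t, 0 < t → f t = a + b * t + c * t ^ 2 + d * t ^ 3)
    (h : Tendsto (fun t => (f t - a) / t) (𝓝[>] 0) (𝓝 I)) : I = b := by
  have hpoly : Tendsto (fun t : ℝ => b + c * t + d * t ^ 2) (𝓝[>] 0) (𝓝 b) :=
    (Continuous.tendsto' (by fun_prop) 0 b (by simp)).mono_left nhdsWithin_le_nhds
  refine tendsto_nhds_unique h (hpoly.congr' ?_)
  filter_upwards [self_mem_nhdsWithin] with t (ht : 0 < t)
  rw [hf t ht]
  field_simp
  ring

lemma volume_add_smul_self {n : ℕ} {K : Set (EuclideanSpace ℝ (Fin n))} (hK : Convex ℝ K)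
    {t : ℝ} (ht : 0 ≤ t) : (volume (K + t • K)).toReal = (1 + t) ^ n * (volume K).toReal := by
  rw [show K + t • K = (1 + t) • K by rw [hK.add_smul zero_le_one ht, one_smul],
    Measure.addHaar_smul, finrank_euclideanSpace_fin,
    ENNReal.toReal_mul, ENNReal.toReal_ofReal (abs_nonneg _), abs_of_nonneg (by positivity)]

open Filter Topology in
lemma integral_supp_self_eq_three_mul_volume {K : Set E³} (hK : Convex ℝ K)
    {μ : Measure (sphere (0 : E³) 1)}
    (h : Tendsto (fun t : ℝ => ((volume (K + t • K)).toReal - (volume K).toReal) / t)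
      (𝓝[>] 0) (𝓝 (∫ u, supp K u ∂μ))) :
    ∫ u, supp K u ∂μ = 3 * (volume K).toReal :=
  eq_of_tendsto_slope_of_eq_cubic (c := 3 * (volume K).toReal) (d := (volume K).toReal)
    (fun t ht => by rw [volume_add_smul_self hK ht.le]; ring) h

lemma mul_sq_div_le_of_bonnesen {W₀ W₁ W₂ a b : ℝ} (hb : 0 < b)
    (h : 2 * W₁ * (a / b) - W₀ - W₂ * (a / b) ^ 2 ≥ 0) :
    W₂ * (a ^ 2 / b) ≤ 2 * W₁ * a - W₀ * b := by
  have key : (2 * W₁ * (a / b) - W₀ - W₂ * (a / b) ^ 2) * b =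
      2 * W₁ * a - W₀ * b - W₂ * (a ^ 2 / b) := by
    field_simp
  nlinarith [mul_nonneg h hb.le]

theorem integral_bound_of_class_R1_general
    (K L : Set (EuclideanSpace ℝ (Fin 3)))
    (hKc : IsCompact K) (hKconv : Convex ℝ K)
    (hLc : IsCompact L) (hLconv : Convex ℝ L)
    (hK0 : (0 : EuclideanSpace ℝ (Fin 3)) ∈ interior K)
    (hL0 : (0 : EuclideanSpace ℝ (Fin 3)) ∈ interior L)
    (W₀ W₁ W₂ W₃ : ℝ)
    (hW : ∀ t : ℝ, 0 ≤ t →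
      (volume (K + t • L)).toReal = W₀ + 3 * W₁ * t + 3 * W₂ * t ^ 2 + W₃ * t ^ 3)
    (μ : Measure (sphere (0 : EuclideanSpace ℝ (Fin 3)) 1)) (hμfin : IsFiniteMeasure μ)
    (hμ : ∀ M : Set (EuclideanSpace ℝ (Fin 3)),
      IsCompact M → Convex ℝ M → (interior M).Nonempty →
        Filter.Tendsto
          (fun t : ℝ => ((volume (K + t • M)).toReal - (volume K).toReal) / t)
          (nhdsWithin 0 (Set.Ioi 0))
          (nhds (∫ u : sphere (0 : EuclideanSpace ℝ (Fin 3)) 1, supp M u ∂μ)))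
    (hW₂pos : 0 < W₂)
    (hR1 : ∀ r ∈ Set.Icc (rIn K L) (rOut K L), 2 * W₁ * r - W₀ - W₂ * r ^ 2 ≥ 0) :
    (∫ u : sphere (0 : EuclideanSpace ℝ (Fin 3)) 1, (supp K u) ^ 2 / supp L u ∂μ)
      ≤ 3 * (volume K).toReal * W₁ / W₂ := by
  have hKne : K.Nonempty := ⟨0, interior_subset hK0⟩
  have hV : (volume K).toReal = W₀ := by
    simpa [Set.zero_smul_set ⟨0, interior_subset hL0⟩] using hW 0 le_rfl
  have hIK := integral_supp_self_eq_three_mul_volume hKconv (hμ K hKc hKconv ⟨0, hK0⟩)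
  have hIL : ∫ u, supp L u ∂μ = 3 * W₁ :=
    eq_of_tendsto_slope_of_eq_cubic (fun t ht => by rw [hW t ht.le, hV])
      (hμ L hLc hLconv ⟨0, hL0⟩)
  have hcK : Continuous fun u : sphere (0 : E³) 1 => supp K u :=
    (continuous_supp hKc.isBounded hKne).comp continuous_subtype_val
  have hcL : Continuous fun u : sphere (0 : E³) 1 => supp L u :=
    (continuous_supp hLc.isBounded ⟨0, interior_subset hL0⟩).comp continuous_subtype_val
  have hLpos (u : sphere (0 : E³) 1) : 0 < supp L u :=
    supp_pos hLc.isBounded hL0 (ne_zero_of_mem_unit_sphere u)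
  have hpt (u : sphere (0 : E³) 1) :
      W₂ * (supp K u ^ 2 / supp L u) ≤ 2 * W₁ * supp K u - W₀ * supp L u :=
    mul_sq_div_le_of_bonnesen (hLpos u) (hR1 _ (supp_div_supp_mem_Icc hKc hKne hLc hL0 u.2))
  have hint {f : sphere (0 : E³) 1 → ℝ} (hf : Continuous f) : Integrable f μ :=
    hf.integrable_of_hasCompactSupport (.of_compactSpace f)
  have hmono : ∫ u, W₂ * (supp K u ^ 2 / supp L u) ∂μ ≤
      ∫ u, (2 * W₁ * supp K u - W₀ * supp L u) ∂μ :=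
    integral_mono (hint (by fun_prop (disch := exact fun u => (hLpos u).ne')))
      (hint (by fun_prop)) hpt
  rw [integral_const_mul, integral_sub (hint (by fun_prop)) (hint (by fun_prop)),
    integral_const_mul, integral_const_mul, hIK, hIL, ← hV] at hmono
  rw [le_div_iff₀ hW₂pos]
  linarith

/-- If `K` is in the class `ℜ₁` with respect to `L` and `W₂ > 0`, then
`∫_{S²} h_K²/h_L dS_K ≤ 3 V(K) W₁ / W₂`, where `S_K` is the surface area measure of `K`. -/
theorem integral_bound_of_class_R1
    (K L : Set (EuclideanSpace ℝ (Fin 3)))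
    (hKc : IsCompact K) (hKconv : Convex ℝ K) (hKint : (interior K).Nonempty)
    (hLc : IsCompact L) (hLconv : Convex ℝ L) (hLint : (interior L).Nonempty)
    (hK0 : (0 : EuclideanSpace ℝ (Fin 3)) ∈ interior K)
    (hL0 : (0 : EuclideanSpace ℝ (Fin 3)) ∈ interior L)
    (W₀ W₁ W₂ W₃ : ℝ)
    (hW : ∀ t : ℝ, 0 ≤ t →
      (volume (K + t • L)).toReal = W₀ + 3 * W₁ * t + 3 * W₂ * t ^ 2 + W₃ * t ^ 3)
    (μ : Measure (sphere (0 : EuclideanSpace ℝ (Fin 3)) 1)) (hμfin : IsFiniteMeasure μ)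
    (hμ : ∀ M : Set (EuclideanSpace ℝ (Fin 3)),
      IsCompact M → Convex ℝ M → (interior M).Nonempty →
        Filter.Tendsto
          (fun t : ℝ => ((volume (K + t • M)).toReal - (volume K).toReal) / t)
          (nhdsWithin 0 (Set.Ioi 0))
          (nhds (∫ u : sphere (0 : EuclideanSpace ℝ (Fin 3)) 1, supp M u ∂μ)))
    (hW₂pos : 0 < W₂)
    (hR1 : ∀ r ∈ Set.Icc (rIn K L) (rOut K L), 2 * W₁ * r - W₀ - W₂ * r ^ 2 ≥ 0) :
    (∫ u : sphere (0 : EuclideanSpace ℝ (Fin 3)) 1, (supp K u) ^ 2 / supp L u ∂μ)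
      ≤ 3 * (volume K).toReal * W₁ / W₂ :=
  integral_bound_of_class_R1_general K L hKc hKconv hLc hLconv hK0 hL0 W₀ W₁ W₂ W₃ hW μ hμfin hμ
    hW₂pos hR1
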